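/- (Generalization of Lemma 2 to n parents) Suppose n parent particles are produced with invariant masses m₁, …, m_n; for each k ∈ {1, …, n}, parent k has four-momentum equal to the sum of a visible four-momentum (E_v⁽ᵏ⁾, p_v⁽ᵏ⁾) and an invisible four-momentum (E_i⁽ᵏ⁾, p_i⁽ᵏ⁾), all daughter four-momenta being causal (E ≥ |p|). Let m_v⁽ᵏ⁾ and vT⁽ᵏ⁾ be the invariant mass and transverse momentum of visible system k, and let pTmiss be the sum of the transverse momenta of the n invisible four-momenta. Then m_{Tn} computed with all hypothesized invisible masses set to zero satisfies m_{Tn} ≤ max(m₁, …, m_n). -/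

import Mathlib

open scoped RealInnerProductSpace

/-- Transverse energy `e(m,p) = √(m² + |p|²)`. -/
noncomputable def transverseEnergy (m : ℝ) (p : EuclideanSpace ℝ (Fin 2)) : ℝ :=
  Real.sqrt (m ^ 2 + ‖p‖ ^ 2)

/-- Transverse mass `m_T(m_v, vT, m_i, qT)`. -/
noncomputable def transverseMass (mv : ℝ) (vT : EuclideanSpace ℝ (Fin 2))
    (mi : ℝ) (qT : EuclideanSpace ℝ (Fin 2)) : ℝ :=
  Real.sqrt (mv ^ 2 + mi ^ 2 +
    2 * (transverseEnergy mv vT * transverseEnergy mi qT - ⟪vT, qT⟫))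

/-- `m_{Tn}`: the `n`-parent generalisation of `mT2`. -/
noncomputable def mTn (n : ℕ) (mv : Fin n → ℝ) (vT : Fin n → EuclideanSpace ℝ (Fin 2))
    (ptmiss : EuclideanSpace ℝ (Fin 2)) (mi : Fin n → ℝ) : ℝ :=
  sInf {r : ℝ | ∃ q : Fin n → EuclideanSpace ℝ (Fin 2), (∑ k, q k) = ptmiss ∧
    r = ⨆ k, transverseMass (mv k) (vT k) (mi k) (q k)}

/-- Projection of a 3-momentum onto the transverse plane (first two coordinates). -/
noncomputable def projT (p : EuclideanSpace ℝ (Fin 3)) : EuclideanSpace ℝ (Fin 2) :=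
  WithLp.toLp 2 (fun i : Fin 2 => p i.castSucc)

/-- Invariant mass `√(E² − |p|²)` of a 3+1 four-momentum `(E, p)`. -/
noncomputable def invariantMass (E : ℝ) (p : EuclideanSpace ℝ (Fin 3)) : ℝ :=
  Real.sqrt (E ^ 2 - ‖p‖ ^ 2)

/-! Take the true invisible transverse momenta as the trial splitting of `pTmiss`; it then
suffices to bound each `m_T` by its parent mass. Writing `m² = m_v² + m_i² + 2(E_v E_i − p_v·p_i)`
and splitting off the longitudinal components `z_v, z_i`, this reduces to
`e_v |q_T| ≤ √(E_v² − z_v²) √(E_i² − z_i²) ≤ E_v E_i − z_v z_i`, the reverse Cauchy–Schwarz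
inequality for causal vectors in 1+1 dimensions. -/

theorem sqrt_sq_sub_sq_mul_sqrt_sq_sub_sq_le {x y a b : ℝ} (ha : |a| ≤ x) (hb : |b| ≤ y) :
    √(x ^ 2 - a ^ 2) * √(y ^ 2 - b ^ 2) ≤ x * y - a * b := by
  have hab : a * b ≤ x * y :=
    (le_abs_self _).trans <| abs_mul a b ▸ mul_le_mul ha hb (abs_nonneg b) ((abs_nonneg a).trans ha)
  have hxa : 0 ≤ x ^ 2 - a ^ 2 := sub_nonneg.mpr (sq_le_sq' (abs_le.mp ha).1 (abs_le.mp ha).2)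
  rw [← Real.sqrt_mul hxa, Real.sqrt_le_left (sub_nonneg.mpr hab)]
  nlinarith [sq_nonneg (x * b - y * a)]

theorem norm_sq_eq_norm_projT_sq_add (p : EuclideanSpace ℝ (Fin 3)) :
    ‖p‖ ^ 2 = ‖projT p‖ ^ 2 + p 2 ^ 2 := by
  simp only [EuclideanSpace.norm_sq_eq, Fin.sum_univ_castSucc (n := 2), Real.norm_eq_abs, sq_abs]
  rfl

theorem inner_eq_inner_projT_add (p q : EuclideanSpace ℝ (Fin 3)) :
    ⟪p, q⟫ = ⟪projT p, projT q⟫ + p 2 * q 2 := by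
  simp only [PiLp.inner_apply, Fin.sum_univ_castSucc (n := 2)]
  simp [projT, mul_comm]

theorem transverseMass_zero_le_invariantMass_add {Ev Ei : ℝ} {pv pinv : EuclideanSpace ℝ (Fin 3)}
    (hv : ‖pv‖ ≤ Ev) (hi : ‖pinv‖ ≤ Ei) :
    transverseMass (invariantMass Ev pv) (projT pv) 0 (projT pinv)
      ≤ invariantMass (Ev + Ei) (pv + pinv) := by
  have hv2 : ‖projT pv‖ ^ 2 + pv 2 ^ 2 ≤ Ev ^ 2 :=
    norm_sq_eq_norm_projT_sq_add pv ▸ pow_le_pow_left₀ (norm_nonneg _) hv 2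
  have hi2 : ‖projT pinv‖ ^ 2 + pinv 2 ^ 2 ≤ Ei ^ 2 :=
    norm_sq_eq_norm_projT_sq_add pinv ▸ pow_le_pow_left₀ (norm_nonneg _) hi 2
  have hEv : 0 ≤ Ev := (norm_nonneg _).trans hv
  have hEi : 0 ≤ Ei := (norm_nonneg _).trans hi
  have hmv : invariantMass Ev pv ^ 2 = Ev ^ 2 - ‖pv‖ ^ 2 :=
    Real.sq_sqrt (sub_nonneg.mpr (pow_le_pow_left₀ (norm_nonneg _) hv 2))
  have hETv : transverseEnergy (invariantMass Ev pv) (projT pv) = √(Ev ^ 2 - pv 2 ^ 2) := by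
    rw [transverseEnergy, hmv, norm_sq_eq_norm_projT_sq_add pv]
    ring_nf
  have hETi : transverseEnergy 0 (projT pinv) ≤ √(Ei ^ 2 - pinv 2 ^ 2) := by
    rw [transverseEnergy]
    exact Real.sqrt_le_sqrt (by linarith)
  have hprod : transverseEnergy (invariantMass Ev pv) (projT pv) * transverseEnergy 0 (projT pinv)
      ≤ Ev * Ei - pv 2 * pinv 2 := by
    rw [hETv]
    refine (mul_le_mul_of_nonneg_left hETi (Real.sqrt_nonneg _)).trans ?_
    exact sqrt_sq_sub_sq_mul_sqrt_sq_sub_sq_le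
      (abs_le_of_sq_le_sq (by linarith [sq_nonneg ‖projT pv‖]) hEv)
      (abs_le_of_sq_le_sq (by linarith [sq_nonneg ‖projT pinv‖]) hEi)
  rw [transverseMass, invariantMass.eq_1 (Ev + Ei)]
  apply Real.sqrt_le_sqrt
  rw [hmv, norm_add_sq_real, inner_eq_inner_projT_add, norm_sq_eq_norm_projT_sq_add pinv]
  linarith

theorem mTn_le_iSup_transverseMass {n : ℕ} (mv : Fin n → ℝ) (vT : Fin n → EuclideanSpace ℝ (Fin 2))
    (mi : Fin n → ℝ) (q : Fin n → EuclideanSpace ℝ (Fin 2)) :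
    mTn n mv vT (∑ k, q k) mi ≤ ⨆ k, transverseMass (mv k) (vT k) (mi k) (q k) := by
  refine csInf_le ⟨0, ?_⟩ ⟨q, rfl, rfl⟩
  rintro _ ⟨_, -, rfl⟩
  exact Real.iSup_nonneg fun k => Real.sqrt_nonneg _

theorem mTn_le_max_parent_masses_general (n : ℕ) (m : Fin n → ℝ)
    (Ev Ei : Fin n → ℝ) (pv pinv : Fin n → EuclideanSpace ℝ (Fin 3))
    (hv : ∀ k, ‖pv k‖ ≤ Ev k) (hi : ∀ k, ‖pinv k‖ ≤ Ei k)
    (hm : ∀ k, invariantMass (Ev k + Ei k) (pv k + pinv k) = m k) :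
    mTn n (fun k => invariantMass (Ev k) (pv k)) (fun k => projT (pv k))
      (∑ k, projT (pinv k)) (fun _ => 0) ≤ ⨆ k, m k :=
  (mTn_le_iSup_transverseMass _ _ _ _).trans <|
    ciSup_mono (Set.finite_range m).bddAbove fun k =>
      hm k ▸ transverseMass_zero_le_invariantMass_add (hv k) (hi k)

/-- generalisation of Lemma 2 to `n` parents: for `n` pair-produced
parents of masses `m₁, …, m_n`, each decaying to a visible and an invisible system,
`m_{Tn}` computed with vanishing hypothesized invisible masses is at most
`max(m₁, …, m_n)`. -/
theorem mTn_le_max_parent_masses (n : ℕ) (hn : 0 < n) (m : Fin n → ℝ)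
    (Ev Ei : Fin n → ℝ) (pv pinv : Fin n → EuclideanSpace ℝ (Fin 3))
    (hv : ∀ k, ‖pv k‖ ≤ Ev k) (hi : ∀ k, ‖pinv k‖ ≤ Ei k)
    (hm : ∀ k, invariantMass (Ev k + Ei k) (pv k + pinv k) = m k) :
    mTn n (fun k => invariantMass (Ev k) (pv k)) (fun k => projT (pv k))
      (∑ k, projT (pinv k)) (fun _ => 0) ≤ ⨆ k, m k :=
  mTn_le_max_parent_masses_general n m Ev Ei pv pinv hv hi hm
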